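/- arXiv:1506.00192 — 6 statements merged into one kernel-verified Lean document; each statement's English description precedes it below -/
import Mathlib

section
/- Let (G, f) be a wall, i.e., a proper coloring f : V → {1, 2, …} of a finite graph G satisfying the support condition f(N[v]) ⊇ {1, …, f(v)} for all v. If v_1, …, v_n is an enumeration of V with f(v_i) ≤ f(v_j) whenever i < j, then the first-fit algorithm applied to this enumeration assigns exactly the color f(v_k) to v_k for every k. -/
/-!
By strong induction on `k`, assume first-fit has reproduced `f` on `v₀, …, v_{k-1}`.
Properness shows that `f (v k)` is not used on an earlier neighbour of `v k`. By the
support condition every smaller positive color `c` occurs on some neighbour `u` of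
`v k`, and `u` precedes `v k` because the enumeration is color-monotone and
`f u = c < f (v k)`. So `f (v k)` is the least free color.
-/

/-- First-fit color of the `k`-th presented vertex: the least positive integer
not already used on an earlier neighbor. -/
noncomputable def firstFitColor {V : Type} (G : SimpleGraph V) (v : ℕ → V) : ℕ → ℕ
  | k => sInf {c : ℕ | 0 < c ∧ ∀ j, ∀ _ : j < k, G.Adj (v j) (v k) → firstFitColor G v j ≠ c}
  termination_by k => k
  decreasing_by assumption

theorem firstFitColor_eq_of_forall_lt {V : Type} (G : SimpleGraph V) (v : ℕ → V) {k c : ℕ}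
    (hc : 0 < c)
    (hfree : ∀ j < k, G.Adj (v j) (v k) → firstFitColor G v j ≠ c)
    (hblocked : ∀ c', 0 < c' → c' < c →
      ∃ j < k, G.Adj (v j) (v k) ∧ firstFitColor G v j = c') :
    firstFitColor G v k = c := by
  rw [firstFitColor]
  refine le_antisymm (Nat.sInf_le ⟨hc, hfree⟩) (le_csInf ⟨c, hc, hfree⟩ ?_)
  rintro c' ⟨hc', hfree'⟩
  by_contra! hlt
  obtain ⟨j, hjk, hadj, hj⟩ := hblocked c' hc' hlt
  exact hfree' j hjk hadj hj

/-- If `(G, f)` is a wall (a proper coloring by positive integers satisfying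
the support condition `f(N[v]) ⊇ {1, …, f(v)}`) and the vertices are
enumerated in nondecreasing order of color, then first-fit assigns exactly the
color `f(v_k)` to `v_k` for every `k`. -/
theorem firstFit_on_wall {n : ℕ} (G : SimpleGraph (Fin n)) (f : Fin n → ℕ)
    (hpos : ∀ v, 1 ≤ f v)
    (hproper : ∀ u v, G.Adj u v → f u ≠ f v)
    (hsupport : ∀ v c, 1 ≤ c → c ≤ f v → ∃ u, (u = v ∨ G.Adj u v) ∧ f u = c)
    (v : ℕ → Fin n)
    (henum : Function.Bijective (fun k : Fin n => v (k : ℕ)))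
    (hmono : ∀ i j, i < j → j < n → f (v i) ≤ f (v j)) :
    ∀ k, k < n → firstFitColor G v k = f (v k) := by
  have hmonoOn : MonotoneOn (f ∘ v) (Set.Iio n) := by
    intro i _ j hj hij
    rcases hij.lt_or_eq with hlt | rfl
    exacts [hmono i j hlt hj, le_rfl]
  intro k
  induction k using Nat.strong_induction_on with
  | _ k IH =>
  intro hk
  refine firstFitColor_eq_of_forall_lt G v (hpos _) (fun j hjk hadj => ?_) (fun c hc hlt => ?_)
  · rw [IH j hjk (hjk.trans hk)]
    exact hproper _ _ hadj
  · obtain ⟨u, hu, rfl⟩ := hsupport (v k) c hc hlt.le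
    obtain ⟨j, rfl⟩ := henum.2 u
    have hjk : (j : ℕ) < k := hmonoOn.reflect_lt j.isLt hk hlt
    exact ⟨j, hjk, hu.resolve_left fun h => hlt.ne (h ▸ rfl), IH j hjk (hjk.trans hk)⟩
end

section
/- Let r ≥ 1. If an r-cap exists, then there is a constant b such that for every natural number k there exists a wall (G, f) whose graph has clique number exactly k and which uses at least r·k − b colors, i.e., |f(V)| ≥ r·k − b. In particular, r ≤ sup over nonempty interval graphs G of χ_FF(G)/ω(G). -/
/-- The interval graph determined by an interval representation `I`. -/
def intervalGraph {n : ℕ} (I : Fin n → Set ℝ) : SimpleGraph (Fin n) where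
  Adj u v := u ≠ v ∧ (I u ∩ I v).Nonempty
  symm := by
    constructor
    intro u v h
    exact ⟨h.1.symm, by rw [Set.inter_comm]; exact h.2⟩
  loopless := by constructor; intro v h; exact h.1 rfl

/-- `I` is an interval representation: every vertex is assigned a nonempty
interval (convex subset) of `ℝ`. -/
def IsIntervalRep {n : ℕ} (I : Fin n → Set ℝ) : Prop :=
  ∀ v, (I v).Nonempty ∧ Convex ℝ (I v)

/-- `χ_FF(G)`: the maximum over all enumerations of the vertices of the number
of distinct colors used by first-fit. -/
noncomputable def chiFF {n : ℕ} (G : SimpleGraph (Fin n)) : ℕ :=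
  sSup {m : ℕ | ∃ v : ℕ → Fin n, Function.Bijective (fun k : Fin n => v (k : ℕ)) ∧
    m = ((Finset.range n).image (firstFitColor G v)).card}

/-- `(G, f)` is a wall: `f` is a proper coloring by positive integers such
that `f(N[v]) ⊇ {1, …, f(v)}` for all `v` (the support condition). -/
def IsWall {n : ℕ} (G : SimpleGraph (Fin n)) (f : Fin n → ℕ) : Prop :=
  (∀ v, 1 ≤ f v) ∧
  (∀ u v, G.Adj u v → f u ≠ f v) ∧
  (∀ v c, 1 ≤ c → c ≤ f v → ∃ u, (u = v ∨ G.Adj u v) ∧ f u = c)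

/-- An `r`-cap: a nonempty interval graph with representation `I`, a proper
coloring `f` by nonpositive integers attaining `0`, an interval `J v ⊆ I v` of
positive length for each vertex (distinct `J`'s being disjoint), and cone
depths `c v ≤ -1`, satisfying the emptiness, sparseness and support
conditions, where `C_v = f(\{u : I_u ∩ J_v ≠ ∅\})`. -/
def IsCap {n : ℕ} (r : ℝ) (I : Fin n → Set ℝ) (f : Fin n → ℤ)
    (J : Fin n → Set ℝ) (c : Fin n → ℤ) : Prop :=
  0 < n ∧
  IsIntervalRep I ∧
  (∀ v, f v ≤ 0) ∧
  (∀ u v, (intervalGraph I).Adj u v → f u ≠ f v) ∧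
  (∃ v, f v = 0) ∧
  (∀ v, J v ⊆ I v ∧ Convex ℝ (J v) ∧ ∃ a b : ℝ, a < b ∧ a ∈ J v ∧ b ∈ J v) ∧
  (∀ u v, (J u ∩ J v).Nonempty → J u = J v) ∧
  (∀ v, c v ≤ -1) ∧
  -- emptiness: C_v ∩ (-∞, c_v] = ∅
  (∀ v u, (I u ∩ J v).Nonempty → c v < f u) ∧
  -- sparseness: |C_v ∩ (c_v, 0]| ≤ -c_v / r
  (∀ v, (((f '' {u | (I u ∩ J v).Nonempty}) ∩ Set.Ioc (c v) 0).ncard : ℝ)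
      ≤ -(c v : ℝ) / r) ∧
  -- support: every integer in (c_v, f v] is a color of N[v]
  (∀ v m, c v < m → m ≤ f v → ∃ u, (u = v ∨ (intervalGraph I).Adj u v) ∧ f u = m)


/-! Walls are built by recursion on the number `s` of colors. Shift the colors of the cap up by `s`,
and inside each `J v`, in pairwise disjoint slots, place a recursively built wall with colors
`1, …, s + c v`. By emptiness these colors lie below the colors of all cap intervals meeting `J v`,
so the coloring stays proper, and the support conditions of the cap and of the child walls give
the wall condition. Above a point of the slot of `v` there are at most `-c v / r` cap intervals
(sparseness) and, inductively, `(s + c v) / r + B` child intervals, where `B` bounds `n` and all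
depths `-c v`; so the clique number is at most `s / r + B`. A disjoint `k`-clique then fixes the
clique number to `k`, and first fit reproduces a wall when its vertices are presented in order of
increasing color. -/

open Set Function

namespace IsCap

variable {n : ℕ} {r : ℝ} {I J : Fin n → Set ℝ} {f c : Fin n → ℤ}

theorem nonempty (h : IsCap r I f J c) (v : Fin n) : (I v).Nonempty := (h.2.1 v).1

theorem ordConnected (h : IsCap r I f J c) (v : Fin n) : (I v).OrdConnected :=
  (h.2.1 v).2.ordConnected

theorem f_nonpos (h : IsCap r I f J c) (v : Fin n) : f v ≤ 0 := h.2.2.1 v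

theorem f_ne (h : IsCap r I f J c) {u v : Fin n} (huv : u ≠ v) (hI : (I u ∩ I v).Nonempty) :
    f u ≠ f v :=
  h.2.2.2.1 u v ⟨huv, hI⟩

theorem exists_f_eq_zero (h : IsCap r I f J c) : ∃ v, f v = 0 := h.2.2.2.2.1

theorem J_subset (h : IsCap r I f J c) (v : Fin n) : J v ⊆ I v := (h.2.2.2.2.2.1 v).1

theorem exists_Icc_subset_J (h : IsCap r I f J c) (v : Fin n) :
    ∃ a b, a < b ∧ Icc a b ⊆ J v := by
  obtain ⟨-, hconv, a, b, hab, ha, hb⟩ := h.2.2.2.2.2.1 v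
  exact ⟨a, b, hab, hconv.ordConnected.out ha hb⟩

theorem J_eq (h : IsCap r I f J c) {u v : Fin n} (huv : (J u ∩ J v).Nonempty) : J u = J v :=
  h.2.2.2.2.2.2.1 u v huv

theorem c_le (h : IsCap r I f J c) (v : Fin n) : c v ≤ -1 := h.2.2.2.2.2.2.2.1 v

theorem c_lt_f (h : IsCap r I f J c) {u v : Fin n} (huv : (I u ∩ J v).Nonempty) : c v < f u :=
  h.2.2.2.2.2.2.2.2.1 v u huv

theorem ncard_le (h : IsCap r I f J c) (v : Fin n) :
    ((f '' {u | (I u ∩ J v).Nonempty} ∩ Ioc (c v) 0).ncard : ℝ) ≤ -(c v : ℝ) / r :=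
  h.2.2.2.2.2.2.2.2.2.1 v

theorem exists_f_eq (h : IsCap r I f J c) {v : Fin n} {m : ℤ} (hcm : c v < m) (hmf : m ≤ f v) :
    ∃ u, (I u ∩ I v).Nonempty ∧ f u = m := by
  obtain ⟨u, rfl | hadj, hu⟩ := h.2.2.2.2.2.2.2.2.2.2 v m hcm hmf
  · exact ⟨u, by rw [inter_self]; exact h.nonempty u, hu⟩
  · exact ⟨u, hadj.2, hu⟩

theorem c_lt_f_self (h : IsCap r I f J c) (v : Fin n) : c v < f v := by
  obtain ⟨a, b, hab, hJ⟩ := h.exists_Icc_subset_J v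
  exact h.c_lt_f ⟨a, h.J_subset v (hJ ⟨le_rfl, hab.le⟩), hJ ⟨le_rfl, hab.le⟩⟩

end IsCap

noncomputable def ply {V : Type*} (I : V → Set ℝ) (x : ℝ) : ℕ := Nat.card {v // x ∈ I v}

section Ply

variable {V W : Type*} {I : V → Set ℝ} {x : ℝ}

theorem ply_eq_zero (h : ∀ v, x ∉ I v) : ply I x = 0 :=
  have : IsEmpty {v // x ∈ I v} := ⟨fun v => h v.1 v.2⟩
  Nat.card_of_isEmpty

theorem ply_le_card [Finite V] (I : V → Set ℝ) (x : ℝ) : ply I x ≤ Nat.card V :=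
  Finite.card_subtype_le _

theorem ply_comp_equiv (e : W ≃ V) : ply (I ∘ e) x = ply I x :=
  Nat.card_congr (e.subtypeEquiv fun _ => Iff.rfl)

theorem ply_sum_elim [Finite V] [Finite W] (J : W → Set ℝ) :
    ply (Sum.elim I J) x = ply I x + ply J x :=
  (Nat.card_congr Equiv.subtypeSum).trans Nat.card_sum

theorem ply_image {φ : ℝ → ℝ} (hφ : Injective φ) (y : ℝ) :
    ply (fun v => φ '' I v) (φ y) = ply I y :=
  Nat.card_congr (Equiv.subtypeEquivRight fun _ => hφ.mem_set_image)

theorem exists_ply_image_le {φ : ℝ → ℝ} (hφ : Injective φ) (x : ℝ) :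
    ∃ y, ply (fun v => φ '' I v) x ≤ ply I y := by
  by_cases hx : x ∈ range φ
  · obtain ⟨y, rfl⟩ := hx
    exact ⟨y, (ply_image hφ y).le⟩
  · refine ⟨0, (ply_eq_zero fun v hv => hx ?_).trans_le (Nat.zero_le _)⟩
    exact image_subset_range φ (I v) hv

theorem ply_sigma_le {ι : Type*} {κ : ι → Type*} [∀ i, Finite (κ i)] {K : ∀ i, κ i → Set ℝ}
    {S : ι → Set ℝ} (hKS : ∀ i w, K i w ⊆ S i) (hS : Pairwise (Disjoint on S)) {i : ι}
    (hx : x ∈ S i) : ply (fun q : Σ i, κ i => K q.1 q.2) x ≤ ply (K i) x := by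
  refine Nat.card_le_card_of_surjective (fun w => ⟨⟨i, w.1⟩, w.2⟩) ?_
  rintro ⟨⟨j, w⟩, hw⟩
  obtain rfl : j = i := hS.eq (not_disjoint_iff.2 ⟨x, hKS j w hw, hx⟩)
  exact ⟨⟨w, hw⟩, rfl⟩

end Ply

theorem StrictMono.ordConnected_image {α β : Type*} [LinearOrder α] [Preorder β] {φ : α → β}
    (hφ : StrictMono φ) (hrange : (range φ).OrdConnected) {s : Set α} (hs : s.OrdConnected) :
    (φ '' s).OrdConnected := by
  refine ⟨?_⟩
  rintro _ ⟨x, hx, rfl⟩ _ ⟨y, hy, rfl⟩ z hz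
  obtain ⟨w, rfl⟩ := hrange.out (mem_range_self x) (mem_range_self y) hz
  exact ⟨w, hs.out hx hy ⟨hφ.le_iff_le.1 hz.1, hφ.le_iff_le.1 hz.2⟩, rfl⟩

theorem exists_strictMono_range_eq_Ioo {a b : ℝ} (hab : a < b) :
    ∃ φ : ℝ → ℝ, StrictMono φ ∧ range φ = Ioo a b := by
  set e := orderIsoIooNegOneOne ℝ
  refine ⟨fun x => (a + b) / 2 + (b - a) / 2 * e x, fun x y hxy => ?_, ?_⟩
  · have : (e x : ℝ) < e y := e.strictMono hxy
    dsimp only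
    gcongr
  · ext y
    constructor
    · rintro ⟨x, rfl⟩
      obtain ⟨h1, h2⟩ := (e x).2
      constructor <;> nlinarith
    · rintro ⟨h1, h2⟩
      have hba : 0 < b - a := by linarith
      refine ⟨e.symm ⟨(2 * y - a - b) / (b - a), ?_, ?_⟩, ?_⟩
      · rw [lt_div_iff₀ hba]; linarith
      · rw [div_lt_iff₀ hba]; linarith
      · simp only [OrderIso.apply_symm_apply]
        field_simp
        ring

/-- The interval form of a wall, on an arbitrary vertex type (the recursion builds sum and sigma
types). -/
structure IsIntervalWall {V : Type*} (I : V → Set ℝ) (g : V → ℕ) (s : ℕ) : Prop where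
  nonempty : ∀ v, (I v).Nonempty
  ordConnected : ∀ v, (I v).OrdConnected
  proper : ∀ u v, u ≠ v → (I u ∩ I v).Nonempty → g u ≠ g v
  mem_Icc : ∀ v, g v ∈ Icc 1 s
  support : ∀ v, ∀ t ∈ Icc 1 (g v), ∃ u, (I u ∩ I v).Nonempty ∧ g u = t
  exists_color : ∀ t ∈ Icc 1 s, ∃ v, g v = t

theorem isIntervalWall_const (x₀ : ℝ) (s : ℕ) :
    IsIntervalWall (fun _ : Fin s => ({x₀} : Set ℝ)) (fun i => i + 1) s where
  nonempty _ := singleton_nonempty x₀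
  ordConnected _ := ordConnected_singleton
  proper _ _ huv _ := by simpa [Fin.val_inj] using huv
  mem_Icc i := ⟨by omega, i.isLt⟩
  support i t ht := ⟨⟨t - 1, by grind⟩, by simp, by grind⟩
  exists_color t ht := ⟨⟨t - 1, by grind⟩, by grind⟩

namespace IsIntervalWall

variable {V W : Type*} {I : V → Set ℝ} {g : V → ℕ} {s : ℕ}

theorem ply_le [Finite V] (h : IsIntervalWall I g s) (x : ℝ) : ply I x ≤ s := by
  have hinj : Injective fun v : {v // x ∈ I v} => (⟨g v, h.mem_Icc v⟩ : Icc 1 s) := by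
    intro u v huv
    by_contra hne
    exact h.proper u v (Subtype.val_injective.ne hne) ⟨x, u.2, v.2⟩ (congrArg Subtype.val huv)
  refine (Nat.card_le_card_of_injective _ hinj).trans_eq ?_
  rw [Nat.card_coe_set_eq, Set.ncard_Icc_nat, add_tsub_cancel_right]

theorem comp_equiv (h : IsIntervalWall I g s) (e : W ≃ V) : IsIntervalWall (I ∘ e) (g ∘ e) s where
  nonempty w := h.nonempty (e w)
  ordConnected w := h.ordConnected (e w)
  proper u w huw := h.proper (e u) (e w) (e.injective.ne huw)
  mem_Icc w := h.mem_Icc (e w)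
  support w t ht := by
    obtain ⟨u, hu, rfl⟩ := h.support (e w) t ht
    exact ⟨e.symm u, by simpa using hu, by simp⟩
  exists_color t ht := by
    obtain ⟨v, rfl⟩ := h.exists_color t ht
    exact ⟨e.symm v, by simp⟩

theorem image (h : IsIntervalWall I g s) {φ : ℝ → ℝ} (hφ : StrictMono φ)
    (hrange : (range φ).OrdConnected) : IsIntervalWall (fun v => φ '' I v) g s where
  nonempty v := (h.nonempty v).image φ
  ordConnected v := hφ.ordConnected_image hrange (h.ordConnected v)
  proper u v huv huv' :=
    h.proper u v huv (by rwa [← image_inter hφ.injective, image_nonempty] at huv')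
  mem_Icc := h.mem_Icc
  support v t ht := (h.support v t ht).imp fun _ hu =>
    ⟨by rw [← image_inter hφ.injective]; exact hu.1.image φ, hu.2⟩
  exists_color := h.exists_color

theorem sum_elim {I' : W → Set ℝ} {g' : W → ℕ} {s' : ℕ} (h : IsIntervalWall I g s)
    (h' : IsIntervalWall I' g' s') (hsep : ∀ v w, Disjoint (I v) (I' w)) :
    IsIntervalWall (Sum.elim I I') (Sum.elim g g') (max s s') where
  nonempty := Sum.rec h.nonempty h'.nonempty
  ordConnected := Sum.rec h.ordConnected h'.ordConnected
  proper := by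
    rintro (u | u) (v | v) huv hne
    · exact h.proper u v (fun h => huv (congrArg _ h)) hne
    · exact absurd hne (not_nonempty_iff_eq_empty.2 (hsep u v).inter_eq)
    · exact absurd hne (not_nonempty_iff_eq_empty.2 (hsep v u).symm.inter_eq)
    · exact h'.proper u v (fun h => huv (congrArg _ h)) hne
  mem_Icc := by
    rintro (v | v)
    · exact Icc_subset_Icc_right (le_max_left s s') (h.mem_Icc v)
    · exact Icc_subset_Icc_right (le_max_right s s') (h'.mem_Icc v)
  support := by
    rintro (v | v) t ht
    · obtain ⟨u, hu, rfl⟩ := h.support v t ht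
      exact ⟨Sum.inl u, hu, rfl⟩
    · obtain ⟨u, hu, rfl⟩ := h'.support v t ht
      exact ⟨Sum.inr u, hu, rfl⟩
  exists_color t ht := by
    rcases le_max_iff.1 ht.2 with hts | hts
    · obtain ⟨v, rfl⟩ := h.exists_color t ⟨ht.1, hts⟩
      exact ⟨Sum.inl v, rfl⟩
    · obtain ⟨v, rfl⟩ := h'.exists_color t ⟨ht.1, hts⟩
      exact ⟨Sum.inr v, rfl⟩

section FinIndexed

variable {m : ℕ} {I : Fin m → Set ℝ} {g : Fin m → ℕ}

theorem isIntervalRep (h : IsIntervalWall I g s) : IsIntervalRep I :=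
  fun v => ⟨h.nonempty v, (h.ordConnected v).convex⟩

theorem isWall (h : IsIntervalWall I g s) : IsWall (intervalGraph I) g := by
  refine ⟨fun v => (h.mem_Icc v).1, fun u v huv => h.proper u v huv.1 huv.2, fun v t ht1 ht2 => ?_⟩
  obtain ⟨u, hu, rfl⟩ := h.support v t ⟨ht1, ht2⟩
  exact ⟨u, (eq_or_ne u v).imp_right fun hne => ⟨hne, hu⟩, rfl⟩

theorem card_image (h : IsIntervalWall I g s) : (Finset.univ.image g).card = s := by
  have : Finset.univ.image g = Finset.Icc 1 s := by
    ext t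
    simp only [Finset.mem_image, Finset.mem_univ, true_and, Finset.mem_Icc]
    exact ⟨fun ⟨v, hv⟩ => hv ▸ h.mem_Icc v, fun ht => h.exists_color t ht⟩
  simp [this]

end FinIndexed

end IsIntervalWall

theorem exists_forall_mem_of_pairwise_inter_nonempty {ι : Type*} {F : ι → Set ℝ} {t : Finset ι}
    (hF : ∀ i ∈ t, Convex ℝ (F i)) (hinter : ∀ i ∈ t, ∀ j ∈ t, (F i ∩ F j).Nonempty) :
    ∃ x, ∀ i ∈ t, x ∈ F i := by
  classical
  obtain ⟨x, hx⟩ := Convex.helly_theorem' hF fun u hut hu => by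
    rw [Module.finrank_self] at hu
    interval_cases h : u.card
    · simp [Finset.card_eq_zero.1 h]
    · obtain ⟨i, rfl⟩ := Finset.card_eq_one.1 h
      simpa using hinter i (hut (Finset.mem_singleton_self i)) i (hut (Finset.mem_singleton_self i))
    · obtain ⟨i, j, -, rfl⟩ := Finset.card_eq_two.1 h
      simpa using hinter i (hut (by simp)) j (hut (by simp))
  exact ⟨x, fun i hi => mem_iInter₂.1 hx i hi⟩

theorem ply_eq_card_filter {V : Type*} [Fintype V] (I : V → Set ℝ) (x : ℝ)
    [DecidablePred fun v => x ∈ I v] : ply I x = (Finset.univ.filter fun v => x ∈ I v).card :=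
  Nat.card_eq_fintype_card.trans (Fintype.card_subtype _)

theorem cliqueNum_intervalGraph {m k : ℕ} {I : Fin m → Set ℝ} (hI : IsIntervalRep I)
    (hle : ∀ x, ply I x ≤ k) (hge : ∃ x, k ≤ ply I x) : (intervalGraph I).cliqueNum = k := by
  classical
  refine le_antisymm ?_ ?_
  · obtain ⟨t, ht⟩ := (intervalGraph I).exists_isNClique_cliqueNum
    obtain ⟨x, hx⟩ := exists_forall_mem_of_pairwise_inter_nonempty (fun v _ => (hI v).2)
      fun u hu v hv => by
        rcases eq_or_ne u v with rfl | huv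
        · rw [inter_self]; exact (hI u).1
        · exact (ht.isClique hu hv huv).2
    rw [← ht.card_eq]
    refine (Finset.card_le_card fun v hv => ?_).trans ((hle x).trans_eq' (ply_eq_card_filter I x))
    simpa using hx v hv
  · obtain ⟨x, hx⟩ := hge
    have hclique : (intervalGraph I).IsClique (Finset.univ.filter fun v => x ∈ I v : Finset _) := by
      intro u hu v hv huv
      simp only [Finset.coe_filter, Finset.mem_univ, true_and, mem_ofPred_eq] at hu hv
      exact ⟨huv, x, hu, hv⟩
    exact (hx.trans_eq (ply_eq_card_filter I x)).trans hclique.card_le_cliqueNum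

theorem firstFitColor_eq_of_isWall {m : ℕ} {G : SimpleGraph (Fin m)} {f : Fin m → ℕ}
    (hf : IsWall G f) {v : ℕ → Fin m}
    (hv : ∀ i u, G.Adj u (v i) → f u < f (v i) → ∃ j < i, v j = u) (i : ℕ) :
    firstFitColor G v i = f (v i) := by
  induction i using Nat.strong_induction_on with
  | _ i ih =>
  rw [firstFitColor]
  have hmem : f (v i) ∈
      {c | 0 < c ∧ ∀ j, ∀ _ : j < i, G.Adj (v j) (v i) → firstFitColor G v j ≠ c} :=
    ⟨hf.1 _, fun j hj hadj => by rw [ih j hj]; exact hf.2.1 _ _ hadj⟩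
  refine le_antisymm (Nat.sInf_le hmem) (le_csInf ⟨_, hmem⟩ fun c ⟨hc, hfree⟩ => ?_)
  by_contra! hlt
  obtain ⟨u, rfl | hadj, rfl⟩ := hf.2.2 (v i) c hc hlt.le
  · exact lt_irrefl _ hlt
  obtain ⟨j, hj, rfl⟩ := hv i u hadj hlt
  exact hfree j hj hadj (ih j hj)

theorem IsWall.card_image_le_chiFF {m : ℕ} {G : SimpleGraph (Fin m)} {f : Fin m → ℕ}
    (hf : IsWall G f) : (Finset.univ.image f).card ≤ chiFF G := by
  rcases m.eq_zero_or_pos with rfl | hm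
  · simp
  set σ := Tuple.sort f
  have hσ : Monotone (f ∘ σ) := Tuple.monotone_sort f
  set v : ℕ → Fin m := fun i => σ ⟨i % m, Nat.mod_lt i hm⟩
  have hvσ : ∀ k : Fin m, v k = σ k := fun k => by simp [v, Nat.mod_eq_of_lt k.isLt]
  have hbij : Bijective fun k : Fin m => v k := by simpa only [hvσ] using σ.bijective
  have hFF := firstFitColor_eq_of_isWall hf (v := v) fun i u _ hlt => by
    refine ⟨σ.symm u, ?_, by rw [hvσ, Equiv.apply_symm_apply]⟩
    by_contra! hle
    have hi : i < m := hle.trans_lt (σ.symm u).isLt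
    have := hσ (show (⟨i, hi⟩ : Fin m) ≤ σ.symm u from hle)
    simp only [comp_apply, Equiv.apply_symm_apply] at this
    exact absurd hlt (not_lt.2 (by simpa [v, Nat.mod_eq_of_lt hi] using this))
  have himg : (Finset.range m).image (firstFitColor G v) = Finset.univ.image f := by
    ext t
    simp only [Finset.mem_image, Finset.mem_range, Finset.mem_univ, true_and, hFF]
    exact ⟨fun ⟨i, hi, hit⟩ => ⟨v i, hit⟩, fun ⟨w, hw⟩ =>
      let ⟨k, hk⟩ := hbij.2 w; ⟨k, k.isLt, by simp only at hk; rw [hk, hw]⟩⟩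
  refine le_csSup ⟨m, ?_⟩ ⟨v, hbij, himg.symm ▸ rfl⟩
  rintro _ ⟨w, -, rfl⟩
  exact Finset.card_image_le.trans (Finset.card_range m).le

theorem exists_disjoint_Ioo_subset {n : ℕ} {J : Fin n → Set ℝ}
    (hJ : ∀ v, ∃ a b, a < b ∧ Icc a b ⊆ J v)
    (hJ_eq : ∀ u v, (J u ∩ J v).Nonempty → J u = J v) :
    ∃ lo hi : Fin n → ℝ, (∀ v, lo v < hi v ∧ Ioo (lo v) (hi v) ⊆ J v) ∧
      Pairwise (Disjoint on fun v => Ioo (lo v) (hi v)) := by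
  -- `p S` depends only on the set `S`, so vertices with equal `J` cut the same interval into slots.
  let p (S : Set ℝ) : ℝ × ℝ := Classical.epsilon fun p => p.1 < p.2 ∧ Icc p.1 p.2 ⊆ S
  have hp v : (p (J v)).1 < (p (J v)).2 ∧ Icc (p (J v)).1 (p (J v)).2 ⊆ J v :=
    Classical.epsilon_spec (p := fun p : ℝ × ℝ => p.1 < p.2 ∧ Icc p.1 p.2 ⊆ J v)
      (let ⟨a, b, hab, h⟩ := hJ v; ⟨(a, b), hab, h⟩)
  let h (S : Set ℝ) : ℝ := ((p S).2 - (p S).1) / n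
  set lo : Fin n → ℝ := fun v => (p (J v)).1 + (v : ℤ) • h (J v)
  set hi : Fin n → ℝ := fun v => (p (J v)).1 + ((v : ℤ) + 1) • h (J v)
  have hslot v : lo v < hi v ∧ Ioo (lo v) (hi v) ⊆ J v := by
    obtain ⟨hab, hJv⟩ := hp v
    have hh : 0 < h (J v) := div_pos (sub_pos.2 hab) (Nat.cast_pos.2 v.pos)
    have hvn : (v : ℝ) + 1 ≤ n := by exact_mod_cast v.isLt
    have hnh : n * h (J v) = (p (J v)).2 - (p (J v)).1 :=
      mul_div_cancel₀ _ (Nat.cast_ne_zero.2 v.pos.ne')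
    simp only [lo, hi, zsmul_eq_mul, Int.cast_natCast, Int.cast_add, Int.cast_one]
    refine ⟨by linarith, Ioo_subset_Icc_self.trans ((Icc_subset_Icc ?_ ?_).trans hJv)⟩ <;>
      nlinarith
  refine ⟨lo, hi, hslot, fun u v huv => ?_⟩
  by_cases hJuv : J u = J v
  · simp only [onFun, lo, hi, hJuv]
    exact pairwise_disjoint_Ioo_add_zsmul _ _ (by exact_mod_cast Fin.val_injective.ne huv)
  · exact Disjoint.mono (hslot u).2 (hslot v).2 (disjoint_iff_inter_eq_empty.2
      (not_nonempty_iff_eq_empty.1 fun h => hJuv (hJ_eq u v h)))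

theorem IsCap.exists_disjoint_embeddings {n : ℕ} {r : ℝ} {I J : Fin n → Set ℝ} {f c : Fin n → ℤ}
    (hcap : IsCap r I f J c) :
    ∃ φ : Fin n → ℝ → ℝ, (∀ v, StrictMono (φ v) ∧ (range (φ v)).OrdConnected ∧ range (φ v) ⊆ J v) ∧
      Pairwise (Disjoint on fun v => range (φ v)) := by
  obtain ⟨lo, hi, hslot, hdisj⟩ :=
    exists_disjoint_Ioo_subset hcap.exists_Icc_subset_J fun _ _ => hcap.J_eq
  choose φ hφ hrange using fun v => exists_strictMono_range_eq_Ioo (hslot v).1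
  refine ⟨φ, fun v => ⟨hφ v, ?_, ?_⟩, ?_⟩
  · rw [hrange]; exact ordConnected_Ioo
  · rw [hrange]; exact (hslot v).2
  · simpa only [hrange] using hdisj

section Stack

variable {n : ℕ} {W : Fin n → Type*}

/-- The cap, with a child wall `K v` placed inside each `J v`. -/
def stackIntervals (I : Fin n → Set ℝ) (K : ∀ v, W v → Set ℝ) : Fin n ⊕ (Σ v, W v) → Set ℝ :=
  Sum.elim I fun q => K q.1 q.2

def stackColors (f : Fin n → ℤ) (s : ℕ) (g : ∀ v, W v → ℕ) : Fin n ⊕ (Σ v, W v) → ℕ :=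
  Sum.elim (fun u => (f u + s).toNat) fun q => g q.1 q.2

variable {r : ℝ} {I J S : Fin n → Set ℝ} {f c : Fin n → ℤ} {s : ℕ} {K : ∀ v, W v → Set ℝ}
  {g : ∀ v, W v → ℕ}

namespace IsCap

theorem ply_le (hcap : IsCap r I f J c) {x : ℝ} {v : Fin n} (hx : x ∈ J v) :
    (ply I x : ℝ) ≤ -(c v : ℝ) / r := by
  have hinj : Injective fun u : {u // x ∈ I u} =>
      (⟨f u, ⟨u, ⟨x, u.2, hx⟩, rfl⟩, hcap.c_lt_f ⟨x, u.2, hx⟩, hcap.f_nonpos u⟩ :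
        ↥(f '' {u | (I u ∩ J v).Nonempty} ∩ Ioc (c v) 0)) := by
    intro u u' huu'
    by_contra hne
    exact hcap.f_ne (Subtype.val_injective.ne hne) ⟨x, u.2, u'.2⟩ (congrArg Subtype.val huu')
  refine le_trans ?_ (hcap.ncard_le v)
  rw [← Nat.card_coe_set_eq]
  exact_mod_cast Nat.card_le_card_of_injective _ hinj

theorem lt_shifted_color (hcap : IsCap r I f J c) (hs : ∀ v, 0 ≤ c v + s)
    (hK : ∀ v, IsIntervalWall (K v) (g v) (c v + s).toNat) (hKJ : ∀ v w, K v w ⊆ J v)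
    {u v : Fin n} {w : W v} (huw : (I u ∩ K v w).Nonempty) : g v w < (f u + s).toNat := by
  have hcf := hcap.c_lt_f (huw.mono (inter_subset_inter_right _ (hKJ v w)))
  have hg := ((hK v).mem_Icc w).2
  have := hs v
  omega

theorem stack_support (hcap : IsCap r I f J c) (hs : ∀ v, 0 ≤ c v + s)
    (hK : ∀ v, IsIntervalWall (K v) (g v) (c v + s).toNat) (hKJ : ∀ v w, K v w ⊆ J v)
    (x : Fin n ⊕ Σ v, W v) : ∀ t ∈ Icc 1 (stackColors f s g x), ∃ y,
      (stackIntervals I K y ∩ stackIntervals I K x).Nonempty ∧ stackColors f s g y = t := by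
  rcases x with u | ⟨v, w⟩
  · rintro t ⟨ht1, ht2⟩
    by_cases htu : t ≤ (c u + s).toNat
    · obtain ⟨w, rfl⟩ := (hK u).exists_color t ⟨ht1, htu⟩
      have hKI : K u w ⊆ I u := (hKJ u w).trans (hcap.J_subset u)
      exact ⟨Sum.inr ⟨u, w⟩,
        (by simpa [stackIntervals, inter_eq_left.2 hKI] using (hK u).nonempty w), rfl⟩
    · have := hs u
      simp only [stackColors, Sum.elim_inl] at ht2
      obtain ⟨u', hu', hfu'⟩ := hcap.exists_f_eq (v := u) (m := t - s) (by omega) (by omega)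
      exact ⟨Sum.inl u', hu', by simp only [stackColors, Sum.elim_inl]; omega⟩
  · intro t ht
    obtain ⟨w', hw', rfl⟩ := (hK v).support w t ht
    exact ⟨Sum.inr ⟨v, w'⟩, hw', rfl⟩

theorem isIntervalWall_stack (hcap : IsCap r I f J c) (hs : ∀ v, 0 ≤ c v + s)
    (hK : ∀ v, IsIntervalWall (K v) (g v) (c v + s).toNat) (hKS : ∀ v w, K v w ⊆ S v)
    (hSJ : ∀ v, S v ⊆ J v) (hS : Pairwise (Disjoint on S)) :
    IsIntervalWall (stackIntervals I K) (stackColors f s g) s := by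
  have hKJ v w : K v w ⊆ J v := (hKS v w).trans (hSJ v)
  refine ⟨Sum.rec hcap.nonempty fun q => (hK q.1).nonempty q.2,
    Sum.rec hcap.ordConnected fun q => (hK q.1).ordConnected q.2, ?_, ?_,
    hcap.stack_support hs hK hKJ, fun t ht => ?_⟩
  · rintro (u | ⟨v, w⟩) (u' | ⟨v', w'⟩) hne hint
    · have := hcap.f_ne (fun h => hne (congrArg _ h)) hint
      have := hcap.c_lt_f_self u
      have := hcap.c_lt_f_self u'
      have := hs u
      have := hs u'
      simp only [stackColors, Sum.elim_inl]
      omega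
    · exact (hcap.lt_shifted_color hs hK hKJ hint).ne'
    · exact (hcap.lt_shifted_color hs hK hKJ (inter_comm _ _ ▸ hint)).ne
    · obtain rfl | hvv := eq_or_ne v v'
      · exact (hK v).proper w w' (fun h => hne (by rw [h])) hint
      · exact absurd hint (not_nonempty_iff_eq_empty.2 (disjoint_iff_inter_eq_empty.1
          ((hS hvv).mono (hKS v w) (hKS v' w'))))
  · rintro (u | ⟨v, w⟩)
    · have := hcap.f_nonpos u
      have := hcap.c_lt_f_self u
      have := hs u
      simp only [stackColors, Sum.elim_inl, mem_Icc]
      omega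
    · have := hcap.c_le v
      exact Icc_subset_Icc_right (by omega) ((hK v).mem_Icc w)
  · obtain ⟨v₀, hv₀⟩ := hcap.exists_f_eq_zero
    obtain ⟨y, -, hy⟩ := hcap.stack_support hs hK hKJ (Sum.inl v₀) t
      (by simpa [stackColors, hv₀] using ht)
    exact ⟨y, hy⟩

theorem ply_stack_le [∀ v, Finite (W v)] (hcap : IsCap r I f J c) (hr : 0 < r)
    (hs : ∀ v, 0 ≤ c v + s) {B : ℝ} (hB : n ≤ B) (hKS : ∀ v w, K v w ⊆ S v)
    (hSJ : ∀ v, S v ⊆ J v) (hS : Pairwise (Disjoint on S))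
    (hply : ∀ v y, (ply (K v) y : ℝ) ≤ (c v + s).toNat / r + B) (x : ℝ) :
    (ply (stackIntervals I K) x : ℝ) ≤ s / r + B := by
  rw [stackIntervals, ply_sum_elim, Nat.cast_add]
  by_cases hx : ∃ v, x ∈ S v
  · obtain ⟨v, hxv⟩ := hx
    have hchild : (ply (fun q : Σ v, W v => K q.1 q.2) x : ℝ) ≤ (c v + s).toNat / r + B :=
      (Nat.cast_le.2 (ply_sigma_le hKS hS hxv)).trans (hply v x)
    have hM : ((c v + s).toNat : ℝ) = c v + s := by
      have := Int.toNat_of_nonneg (hs v)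
      exact_mod_cast this
    calc _ ≤ -(c v : ℝ) / r + ((c v + s).toNat / r + B) :=
          add_le_add (hcap.ply_le (hSJ v hxv)) hchild
      _ = s / r + B := by rw [hM]; ring
  · simp only [not_exists] at hx
    rw [ply_eq_zero (I := fun q : Σ v, W v => K q.1 q.2) fun q hq => hx q.1 (hKS _ _ hq)]
    have := (Nat.cast_le (α := ℝ)).2 (ply_le_card I x)
    rw [Nat.card_fin] at this
    have : 0 ≤ (s : ℝ) / r := by positivity
    push_cast
    linarith

end IsCap

end Stack

theorem IsCap.exists_isIntervalWall {n : ℕ} {r : ℝ} {I J : Fin n → Set ℝ} {f c : Fin n → ℤ}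
    (hcap : IsCap r I f J c) (hr : 0 < r) {B : ℝ} (hBn : n ≤ B) (hBc : ∀ v, -(c v : ℝ) ≤ B)
    (s : ℕ) : ∃ (V : Type) (_ : Finite V) (K : V → Set ℝ) (g : V → ℕ),
      IsIntervalWall K g s ∧ ∀ x, (ply K x : ℝ) ≤ s / r + B := by
  induction s using Nat.strong_induction_on with
  | _ s ih =>
  by_cases hs : ∀ v, 0 ≤ c v + s
  · obtain ⟨φ, hφ, hdisj⟩ := hcap.exists_disjoint_embeddings
    have hlt v : (c v + s).toNat < s := by have := hcap.c_le v; have := hs v; omega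
    choose W _ K g hK hply using fun v => ih _ (hlt v)
    refine ⟨_, inferInstance, stackIntervals I fun v w => φ v '' K v w, stackColors f s g,
      hcap.isIntervalWall_stack hs (fun v => (hK v).image (hφ v).1 (hφ v).2.1)
        (fun v w => image_subset_range _ _) (fun v => (hφ v).2.2) hdisj,
      hcap.ply_stack_le hr hs hBn (fun v w => image_subset_range _ _) (fun v => (hφ v).2.2) hdisj
        fun v y => ?_⟩
    obtain ⟨y', hy'⟩ := exists_ply_image_le (I := K v) (hφ v).1.injective y
    exact (Nat.cast_le.2 hy').trans (hply v y')
  · -- `s < -c v ≤ B`, so an `s`-clique already obeys the bound.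
    simp only [not_forall, not_le] at hs
    obtain ⟨v, hv⟩ := hs
    refine ⟨Fin s, inferInstance, _, _, isIntervalWall_const 0 s, fun x => ?_⟩
    have hsB : (s : ℝ) ≤ B := (hBc v).trans' (by exact_mod_cast (by omega : (s : ℤ) ≤ -c v))
    have := (Nat.cast_le (α := ℝ)).2 ((isIntervalWall_const 0 s).ply_le x)
    have : 0 ≤ (s : ℝ) / r := by positivity
    linarith

theorem IsIntervalWall.exists_wall {V : Type} [Finite V] {I : V → Set ℝ} {g : V → ℕ} {s k : ℕ}
    (h : IsIntervalWall I g s) (hply : ∀ x, ply I x ≤ k) :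
    ∃ (m : ℕ) (I' : Fin m → Set ℝ) (f' : Fin m → ℕ), IsIntervalRep I' ∧
      IsWall (intervalGraph I') f' ∧ (intervalGraph I').cliqueNum = k ∧
      (Finset.univ.image f').card = max s k := by
  obtain ⟨φ, hφ, hrange⟩ := exists_strictMono_range_eq_Ioo zero_lt_one
  have hφ2 (v) : (2 : ℝ) ∉ φ '' I v := fun h2 => by
    have := hrange ▸ image_subset_range φ (I v) h2
    exact absurd this.2 (by norm_num)
  have hW := (h.image hφ (hrange ▸ ordConnected_Ioo)).sum_elim (isIntervalWall_const 2 k)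
    fun v _ => disjoint_singleton_right.2 (hφ2 v)
  obtain ⟨m, ⟨e⟩⟩ := Finite.exists_equiv_fin (V ⊕ Fin k)
  have hW' := hW.comp_equiv e.symm
  refine ⟨m, _, _, hW'.isIntervalRep, hW'.isWall,
    cliqueNum_intervalGraph hW'.isIntervalRep (fun x => ?_) ⟨2, ?_⟩, hW'.card_image⟩ <;>
    rw [ply_comp_equiv, ply_sum_elim]
  · by_cases hx : x = 2
    · rw [hx, ply_eq_zero hφ2, zero_add]
      exact (isIntervalWall_const 2 k).ply_le 2
    · rw [ply_eq_zero (I := fun _ : Fin k => ({2} : Set ℝ)) fun _ => hx, add_zero]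
      obtain ⟨y, hy⟩ := exists_ply_image_le (I := I) hφ.injective x
      exact hy.trans (hply y)
  · simp [ply]

theorem IsCap.exists_walls {n : ℕ} {r : ℝ} {I J : Fin n → Set ℝ} {f c : Fin n → ℤ}
    (hcap : IsCap r I f J c) (hr : 0 < r) :
    ∃ b : ℝ, ∀ k : ℕ, ∃ (m : ℕ) (I' : Fin m → Set ℝ) (f' : Fin m → ℕ),
      IsIntervalRep I' ∧ IsWall (intervalGraph I') f' ∧ (intervalGraph I').cliqueNum = k ∧
      r * (k : ℝ) - b ≤ ((Finset.univ.image f').card : ℝ) := by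
  obtain ⟨B, hBn, hBc⟩ : ∃ B : ℝ, n ≤ B ∧ ∀ v, -(c v : ℝ) ≤ B := by
    obtain ⟨a, ha⟩ := (finite_range c).bddBelow
    exact ⟨max n (-a), le_max_left _ _, fun v => le_max_of_le_right (by
      have : a ≤ c v := ha (mem_range_self v)
      exact_mod_cast neg_le_neg this)⟩
  refine ⟨r * B + 1, fun k => ?_⟩
  set s := ⌊r * (k - B)⌋₊
  obtain ⟨V, _, K, g, hK, hply⟩ := hcap.exists_isIntervalWall hr hBn hBc s
  obtain ⟨m, I', f', hrep, hwall, hclique, hcard⟩ := hK.exists_wall (k := k) fun x => by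
    rcases Nat.eq_zero_or_pos s with hs | hs
    · exact (hK.ply_le x).trans (hs ▸ Nat.zero_le k)
    · have hs' : (s : ℝ) ≤ r * (k - B) := Nat.floor_le (by linarith [Nat.floor_pos.1 hs])
      have : (s : ℝ) / r ≤ k - B := by rwa [div_le_iff₀ hr, mul_comm]
      exact_mod_cast (hply x).trans (show (s : ℝ) / r + B ≤ k by linarith)
  refine ⟨m, I', f', hrep, hwall, hclique, ?_⟩
  have := Nat.lt_floor_add_one (r * (k - B))
  rw [hcard, Nat.cast_max]
  exact le_max_of_le_left (by linarith)

theorem exists_chiFF_gt_of_walls {r b : ℝ}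
    (h : ∀ k : ℕ, ∃ (m : ℕ) (I' : Fin m → Set ℝ) (f' : Fin m → ℕ),
      IsIntervalRep I' ∧ IsWall (intervalGraph I') f' ∧ (intervalGraph I').cliqueNum = k ∧
      r * (k : ℝ) - b ≤ ((Finset.univ.image f').card : ℝ)) {ε : ℝ} (hε : 0 < ε) :
    ∃ (m : ℕ) (I' : Fin m → Set ℝ), 0 < m ∧ IsIntervalRep I' ∧
      (r - ε) * ((intervalGraph I').cliqueNum : ℝ) < (chiFF (intervalGraph I') : ℝ) := by
  obtain ⟨k, hk⟩ := exists_nat_gt (max (b / ε) 0)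
  obtain ⟨hbk, hk0⟩ := max_lt_iff.1 hk
  obtain ⟨m, I', f', hrep, hwall, hclique, hcard⟩ := h k
  have hkm : k ≤ m := by
    obtain ⟨t, ht⟩ := (intervalGraph I').exists_isNClique_cliqueNum
    simpa [hclique, ht.card_eq] using t.card_le_univ
  refine ⟨m, I', Nat.cast_pos.1 (hk0.trans_le (Nat.cast_le.2 hkm)), hrep, ?_⟩
  rw [hclique]
  calc (r - ε) * k < r * k - b := by rw [div_lt_iff₀ hε] at hbk; linarith
    _ ≤ _ := hcard
    _ ≤ _ := by exact_mod_cast hwall.card_image_le_chiFF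

/-- If an `r`-cap exists (`r ≥ 1`), then there is a constant `b` such that for
every `k` there is a wall whose graph has clique number exactly `k` using at
least `r·k - b` colors; in particular, `r` is at most the sup of `χ_FF/ω` over
nonempty interval graphs. -/
theorem cap_gives_walls (r : ℝ) (hr : 1 ≤ r) {n : ℕ} (I : Fin n → Set ℝ)
    (f : Fin n → ℤ) (J : Fin n → Set ℝ) (c : Fin n → ℤ)
    (hcap : IsCap r I f J c) :
    (∃ b : ℝ, ∀ k : ℕ, ∃ (m : ℕ) (I' : Fin m → Set ℝ) (f' : Fin m → ℕ),
      IsIntervalRep I' ∧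
      IsWall (intervalGraph I') f' ∧
      (intervalGraph I').cliqueNum = k ∧
      r * (k : ℝ) - b ≤ ((Finset.univ.image f').card : ℝ)) ∧
    (∀ ε : ℝ, 0 < ε → ∃ (m : ℕ) (I' : Fin m → Set ℝ),
      0 < m ∧ IsIntervalRep I' ∧
      (r - ε) * ((intervalGraph I').cliqueNum : ℝ) < (chiFF (intervalGraph I') : ℝ)) := by
  obtain ⟨b, hb⟩ := hcap.exists_walls (by linarith)
  exact ⟨⟨b, hb⟩, fun _ hε => exists_chiFF_gt_of_walls hb hε⟩
end

section
/- Let r > 4, let θ be real with 1 ≤ θ < r − 2, let δ > 0, and let N > 1 be an integer. If the sequence u satisfies u_0 = u_1 ≤ u_2 < u_3 < ⋯ < u_N, then u_{N+1} ≥ 0. -/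
/-- The sequence `u₀ = u₁ = 1`, `u₂ = θ + δ`,
`uₙ = (r - θ)u_{n-1} - (r - 2θ)u_{n-2} - θu_{n-3}` for `n ≥ 3`. -/
def u (r θ δ : ℝ) : ℕ → ℝ
  | 0 => 1
  | 1 => 1
  | 2 => θ + δ
  | (n + 3) => (r - θ) * u r θ δ (n + 2) - (r - 2 * θ) * u r θ δ (n + 1) - θ * u r θ δ n

theorem u_add_three_eq (r θ δ : ℝ) (n : ℕ) :
    u r θ δ (n + 3) =
      (r - θ) * (u r θ δ (n + 2) - u r θ δ (n + 1)) + θ * (u r θ δ (n + 1) - u r θ δ n) := by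
  rw [u]
  ring

theorem u_add_three_nonneg {r θ δ : ℝ} (hθ : 0 ≤ θ) (hθr : θ ≤ r) {n : ℕ}
    (h₀ : u r θ δ n ≤ u r θ δ (n + 1)) (h₁ : u r θ δ (n + 1) ≤ u r θ δ (n + 2)) :
    0 ≤ u r θ δ (n + 3) := by
  rw [u_add_three_eq]
  exact add_nonneg (mul_nonneg (sub_nonneg.mpr hθr) (sub_nonneg.mpr h₁))
    (mul_nonneg hθ (sub_nonneg.mpr h₀))

theorem u_succ_nonneg_general (r θ δ : ℝ) (hθ1 : 1 ≤ θ) (hθ2 : θ < r - 2)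
    (N : ℕ) (hN : 1 < N)
    (h01 : u r θ δ 0 = u r θ δ 1)
    (h12 : u r θ δ 1 ≤ u r θ δ 2)
    (hchain : ∀ m : ℕ, 2 ≤ m → m < N → u r θ δ m < u r θ δ (m + 1)) :
    0 ≤ u r θ δ (N + 1) := by
  obtain ⟨n, rfl⟩ : ∃ n, N = n + 2 := ⟨N - 2, by omega⟩
  have hmono : ∀ m < n + 2, u r θ δ m ≤ u r θ δ (m + 1)
    | 0, _ => h01.le
    | 1, _ => h12
    | m + 2, hm => (hchain (m + 2) (by omega) hm).le
  exact u_add_three_nonneg (by linarith) (by linarith)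
    (hmono n (by omega)) (hmono (n + 1) (by omega))

/-- If `r > 4`, `1 ≤ θ < r - 2`, `δ > 0`, `N > 1`, and
`u₀ = u₁ ≤ u₂ < u₃ < ⋯ < u_N`, then `u_{N+1} ≥ 0`. -/
theorem u_succ_nonneg (r θ δ : ℝ) (hr : 4 < r) (hθ1 : 1 ≤ θ) (hθ2 : θ < r - 2)
    (hδ : 0 < δ) (N : ℕ) (hN : 1 < N)
    (h01 : u r θ δ 0 = u r θ δ 1)
    (h12 : u r θ δ 1 ≤ u r θ δ 2)
    (hchain : ∀ m : ℕ, 2 ≤ m → m < N → u r θ δ m < u r θ δ (m + 1)) :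
    0 ≤ u r θ δ (N + 1) :=
  u_succ_nonneg_general r θ δ hθ1 hθ2 N hN h01 h12 hchain
end

section
/- For every integer n ≥ 1, φ_n(r − θ) = r + u_3 + u_4 + ⋯ + u_{n+2}, i.e., (u_{n+1} − u_n)(r − θ) + r·u_n = r + Σ_{k=3}^{n+2} u_k, where φ_n(y) = (u_{n+1} − u_n)·y + r·u_n. -/
/-- The affine map `φₙ(y) = (u_{n+1} - uₙ)·y + r·uₙ`. -/
def phi (r θ δ : ℝ) (n : ℕ) (y : ℝ) : ℝ :=
  (u r θ δ (n + 1) - u r θ δ n) * y + r * u r θ δ n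

lemma phi_zero_sub (r θ δ : ℝ) : phi r θ δ 0 (r - θ) = r := by
  simp [phi, u]

/-- At `y = r - θ` the increment `φₙ₊₁ - φₙ` is exactly the right-hand side of the recurrence
defining `uₙ₊₃`, so the values `φₙ(r - θ)` telescope. -/
lemma phi_succ_sub (r θ δ : ℝ) (n : ℕ) :
    phi r θ δ (n + 1) (r - θ) = phi r θ δ n (r - θ) + u r θ δ (n + 3) := by
  rw [phi, phi, u]
  ring

theorem phi_imagetop_general (r θ δ : ℝ) (n : ℕ) :
    phi r θ δ n (r - θ) = r + ∑ k ∈ Finset.Icc 3 (n + 2), u r θ δ k := by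
  induction n with
  | zero => simpa using phi_zero_sub r θ δ
  | succ n ih =>
    rw [phi_succ_sub, ih, add_assoc,
      Finset.sum_Icc_succ_top (show 3 ≤ n + 1 + 2 by omega)]

/-- For every `n ≥ 1`, `φₙ(r - θ) = r + u₃ + u₄ + ⋯ + u_{n+2}`. -/
theorem phi_imagetop (r θ δ : ℝ) (n : ℕ) (hn : 1 ≤ n) :
    phi r θ δ n (r - θ) = r + ∑ k ∈ Finset.Icc 3 (n + 2), u r θ δ k :=
  phi_imagetop_general r θ δ n
end

section
/- Let r, θ, δ be real numbers and let α, β, γ be real numbers with α < −1 and 0 < γ < 0.56 < β < 1, such that q(x) = (1 − x/α)(1 − x/β)(1 − x/γ) for all x, where q(x) = 1 − (r − θ)x + (r − 2θ)x² + θx³. If θ + δ < 1/(1 − γ), then the differences u_{n+1} − u_n tend to −∞ as n → ∞. -/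
/-- The cubic `q(x) = 1 - (r - θ)x + (r - 2θ)x² + θx³`. -/
def q (r θ x : ℝ) : ℝ :=
  1 - (r - θ) * x + (r - 2 * θ) * x ^ 2 + θ * x ^ 3

/-!
The reciprocals `a = 1/α`, `b = 1/β`, `c = 1/γ` of the roots of `q` are the roots of the
characteristic polynomial of the recurrence, so `uₙ = A aⁿ + B bⁿ + C cⁿ`, and
`-1 < a < 0 < b < c` with `c > 1`. Hence `u_{n+1} - uₙ` is dominated by `C (c - 1) cⁿ`, and it
remains to see that `C < 0`. Up to the positive factor `(c - a)(c - b)`, `C` is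
`u₂ - (a + b)u₁ + ab u₀ = (1 - a)(1 - b) + θ + δ - 1`; since `q(1) = 1` gives
`(1 - a)(1 - b)(1 - c) = 1`, this equals `θ + δ - 1/(1 - γ)`, which is negative by hypothesis.
-/

open Filter Topology

section ThreeTermRecurrence

variable {K : Type*} [Field K]

/-- The coefficient of `aⁿ` in the closed form of a solution of the recurrence with
characteristic roots `a, b, c`. -/
def rootCoeff (v : ℕ → K) (a b c : K) : K :=
  (v 2 - (b + c) * v 1 + b * c * v 0) / ((a - b) * (a - c))

theorem eq_rootCoeff_mul_pow_add {v : ℕ → K} {a b c : K} (hab : a ≠ b) (hac : a ≠ c)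
    (hbc : b ≠ c)
    (hrec : ∀ n, v (n + 3) =
      (a + b + c) * v (n + 2) - (a * b + a * c + b * c) * v (n + 1) + a * b * c * v n)
    (n : ℕ) :
    v n = rootCoeff v a b c * a ^ n + rootCoeff v b a c * b ^ n + rootCoeff v c a b * c ^ n := by
  set w : ℕ → K := fun n =>
    rootCoeff v a b c * a ^ n + rootCoeff v b a c * b ^ n + rootCoeff v c a b * c ^ n
  have hab' : a - b ≠ 0 := sub_ne_zero.mpr hab
  have hac' : a - c ≠ 0 := sub_ne_zero.mpr hac
  have hbc' : b - c ≠ 0 := sub_ne_zero.mpr hbc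
  have hw : ∀ k, v k = w k ∧ v (k + 1) = w (k + 1) ∧ v (k + 2) = w (k + 2) := by
    intro k
    induction k with
    | zero =>
      simp only [w, rootCoeff]
      refine ⟨?_, ?_, ?_⟩ <;> field_simp <;> ring
    | succ k ih =>
      obtain ⟨h0, h1, h2⟩ := ih
      refine ⟨h1, h2, ?_⟩
      rw [hrec, h0, h1, h2]
      simp only [w]
      ring
  exact (hw n).1

end ThreeTermRecurrence

theorem tendsto_mul_pow_add_atBot {A B C a b c : ℝ} (ha : |a| < c) (hb : |b| < c) (hc : 1 < c)
    (hC : C < 0) : Tendsto (fun n : ℕ => A * a ^ n + B * b ^ n + C * c ^ n) atTop atBot := by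
  have hc0 : 0 < c := by linarith
  have hratio : ∀ {x : ℝ}, |x| < c → Tendsto (fun n : ℕ => (x / c) ^ n) atTop (𝓝 0) :=
    fun hx => tendsto_pow_atTop_nhds_zero_of_abs_lt_one <| by
      rwa [abs_div, abs_of_pos hc0, div_lt_one hc0]
  have hinner : Tendsto (fun n : ℕ => A * (a / c) ^ n + B * (b / c) ^ n + C) atTop (𝓝 C) := by
    simpa using ((hratio ha).const_mul A).add ((hratio hb).const_mul B) |>.add_const C
  refine ((tendsto_pow_atTop_atTop_of_one_lt hc).atTop_mul_neg hC hinner).congr fun n => ?_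
  simp only [div_pow]
  field_simp

theorem q_coeffs_of_eq_mul {r θ a b c : ℝ}
    (h : ∀ x, q r θ x = (1 - a * x) * (1 - b * x) * (1 - c * x)) :
    r - θ = a + b + c ∧ r - 2 * θ = a * b + a * c + b * c ∧ θ = -(a * b * c) := by
  have e1 := h 1
  have e2 := h (-1)
  have e3 := h 2
  simp only [q] at e1 e2 e3
  refine ⟨?_, ?_, ?_⟩
  · linear_combination -e1 + (1 / 3) * e2 + (1 / 6) * e3
  · linear_combination (1 / 2) * e1 + (1 / 2) * e2
  · linear_combination (-1 / 2) * e1 - (1 / 6) * e2 + (1 / 6) * e3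

theorem u_add_three {r θ δ a b c : ℝ}
    (h : ∀ x, q r θ x = (1 - a * x) * (1 - b * x) * (1 - c * x)) (n : ℕ) :
    u r θ δ (n + 3) = (a + b + c) * u r θ δ (n + 2) - (a * b + a * c + b * c) * u r θ δ (n + 1)
      + a * b * c * u r θ δ n := by
  obtain ⟨h1, h2, h3⟩ := q_coeffs_of_eq_mul h
  rw [u, h1, h2, h3]
  ring

theorem rootCoeff_u_neg {r θ δ a b γ : ℝ} (hγ0 : γ ≠ 0) (hγ1 : γ < 1)
    (h : ∀ x, q r θ x = (1 - a * x) * (1 - b * x) * (1 - γ⁻¹ * x)) (hlt : θ + δ < 1 / (1 - γ))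
    (hca : a < γ⁻¹) (hcb : b < γ⁻¹) :
    rootCoeff (u r θ δ) γ⁻¹ a b < 0 := by
  have hγ1' : 0 < 1 - γ := sub_pos.mpr hγ1
  have hq1 : (1 - a) * (1 - b) * (1 - γ) = -γ := by
    have e := h 1
    simp only [q] at e
    field_simp at e
    linear_combination e
  have hlt' : (θ + δ) * (1 - γ) < 1 := (lt_div_iff₀ hγ1').mp hlt
  have hnum : u r θ δ 2 - (a + b) * u r θ δ 1 + a * b * u r θ δ 0 < 0 := by
    have hscaled : (u r θ δ 2 - (a + b) * u r θ δ 1 + a * b * u r θ δ 0) * (1 - γ)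
        = (θ + δ) * (1 - γ) - 1 := by
      simp only [u]
      linear_combination hq1
    exact neg_of_mul_neg_left (by linarith) hγ1'.le
  exact div_neg_of_neg_of_pos hnum (mul_pos (sub_pos.mpr hca) (sub_pos.mpr hcb))

theorem diff_tendsto_atBot_general (r θ δ α β γ : ℝ)
    (hα : α < -1) (hγ0 : 0 < γ) (hγ : γ < 0.56) (hβ0 : 0.56 < β)
    (hfact : ∀ x : ℝ, q r θ x = (1 - x / α) * (1 - x / β) * (1 - x / γ))
    (hlt : θ + δ < 1 / (1 - γ)) :
    Filter.Tendsto (fun n => u r θ δ (n + 1) - u r θ δ n) Filter.atTop Filter.atBot := by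
  set a := α⁻¹
  set b := β⁻¹
  set c := γ⁻¹
  have h : ∀ x, q r θ x = (1 - a * x) * (1 - b * x) * (1 - c * x) := fun x => by
    rw [hfact]; ring
  have hγ1 : γ < 1 := by linarith
  have ha0 : a < 0 := inv_lt_zero'.mpr (by linarith)
  have ha1 : |a| < 1 := by
    rw [abs_inv]; exact inv_lt_one_of_one_lt₀ (by rw [abs_of_neg] <;> linarith)
  have hb0 : 0 < b := inv_pos.mpr (by linarith)
  have hbc : b < c := (inv_lt_inv₀ (by linarith) hγ0).mpr (hγ.trans hβ0)
  have hc1 : 1 < c := (one_lt_inv₀ hγ0).mpr hγ1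
  have hC := rootCoeff_u_neg hγ0.ne' hγ1 h hlt (by linarith) hbc
  have hu := eq_rootCoeff_mul_pow_add (by linarith) (by linarith) hbc.ne (u_add_three (δ := δ) h)
  refine (tendsto_mul_pow_add_atBot (A := rootCoeff (u r θ δ) a b c * (a - 1))
    (B := rootCoeff (u r θ δ) b a c * (b - 1)) (by linarith) (by rwa [abs_of_pos hb0]) hc1
    (mul_neg_of_neg_of_pos hC (sub_pos.mpr hc1))).congr fun n => ?_
  rw [hu (n + 1), hu n]
  ring

/-- Suppose `q` factors as `(1 - x/α)(1 - x/β)(1 - x/γ)` with real roots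
`α < -1` and `0 < γ < 0.56 < β < 1`.  If `θ + δ < 1/(1 - γ)`, then
`u_{n+1} - uₙ → -∞`. -/
theorem diff_tendsto_atBot (r θ δ α β γ : ℝ)
    (hα : α < -1) (hγ0 : 0 < γ) (hγ : γ < 0.56) (hβ0 : 0.56 < β) (hβ1 : β < 1)
    (hfact : ∀ x : ℝ, q r θ x = (1 - x / α) * (1 - x / β) * (1 - x / γ))
    (hlt : θ + δ < 1 / (1 - γ)) :
    Filter.Tendsto (fun n => u r θ δ (n + 1) - u r θ δ n) Filter.atTop Filter.atBot :=
  diff_tendsto_atBot_general r θ δ α β γ hα hγ0 hγ hβ0 hfact hlt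
end

section
/- Let r, θ, δ be real numbers. Let α be a real number with |α| > 1 and let γ be a complex number with nonzero imaginary part and |γ| < 1, such that q(x) = (1 − x/α)(1 − x/γ)(1 − x/γ̄) for all complex x, where γ̄ is the complex conjugate of γ and q(x) = 1 − (r − θ)x + (r − 2θ)x² + θx³. Then there exists an integer N > 0 such that u_N ≥ u_{N+1}; i.e., the sequence u is not strictly increasing from some point on. -/
/-- The cubic `q` over `ℂ`: `q(x) = 1 - (r - θ)x + (r - 2θ)x² + θx³`. -/
def qC (r θ : ℝ) (x : ℂ) : ℂ :=
  1 - ((r : ℂ) - (θ : ℂ)) * x + ((r : ℂ) - 2 * (θ : ℂ)) * x ^ 2 + (θ : ℂ) * x ^ 3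

/-!
The reciprocals `α⁻¹, γ⁻¹, γ̄⁻¹` of the roots of `q` are the characteristic roots of the
recurrence, and as `u` is real the conjugate root only enters through real parts:
`uₙ = A α⁻ⁿ + Re (B γ⁻ⁿ)` with `A` real. If `u` increased from `n = 1` on we would
have `uₙ ≥ 1`, while `A α⁻ⁿ → 0`. So `B ≠ 0`, and writing `γ⁻¹ = R ζ` with `|ζ| = 1`,
`ζ ≠ ±1`, it suffices that `Re (B ζⁿ) < 0` infinitely often. Otherwise eventually
`Re (B ζⁿ)² ≤ |B| Re (B ζⁿ)`; but the partial sums on the right are bounded geometric sums,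
while those on the left grow like `n |B|² / 2` because `ζ² ≠ 1`.
-/

open Finset Filter

section LinearRecurrence

variable {K : Type*} [Field K] {p q s a b c : K}

theorem eq_geom_combination_of_rec {w : ℕ → K} {A B C : K}
    (ha : a ^ 3 = p * a ^ 2 + q * a + s) (hb : b ^ 3 = p * b ^ 2 + q * b + s)
    (hc : c ^ 3 = p * c ^ 2 + q * c + s)
    (hrec : ∀ n, w (n + 3) = p * w (n + 2) + q * w (n + 1) + s * w n)
    (h0 : w 0 = A + B + C) (h1 : w 1 = A * a + B * b + C * c)
    (h2 : w 2 = A * a ^ 2 + B * b ^ 2 + C * c ^ 2) :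
    ∀ n, w n = A * a ^ n + B * b ^ n + C * c ^ n
  | 0 => by simpa using h0
  | 1 => by simpa using h1
  | 2 => h2
  | n + 3 => by
    rw [hrec, eq_geom_combination_of_rec ha hb hc hrec h0 h1 h2 n,
      eq_geom_combination_of_rec ha hb hc hrec h0 h1 h2 (n + 1),
      eq_geom_combination_of_rec ha hb hc hrec h0 h1 h2 (n + 2)]
    linear_combination -(A * a ^ n * ha + B * b ^ n * hb + C * c ^ n * hc)

/-- Lagrange interpolation at three distinct nodes. -/
theorem exists_vandermonde_three_solution (hab : a ≠ b) (hac : a ≠ c) (hbc : b ≠ c)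
    (v₀ v₁ v₂ : K) :
    ∃ A B C : K, v₀ = A + B + C ∧ v₁ = A * a + B * b + C * c ∧
      v₂ = A * a ^ 2 + B * b ^ 2 + C * c ^ 2 := by
  have hab' : a - b ≠ 0 := sub_ne_zero.mpr hab
  have hac' : a - c ≠ 0 := sub_ne_zero.mpr hac
  have hbc' : b - c ≠ 0 := sub_ne_zero.mpr hbc
  refine ⟨(v₂ - (b + c) * v₁ + b * c * v₀) / ((a - b) * (a - c)),
    (v₂ - (a + c) * v₁ + a * c * v₀) / ((b - a) * (b - c)),
    (v₂ - (a + b) * v₁ + a * b * v₀) / ((c - a) * (c - b)), ?_, ?_, ?_⟩ <;>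
  · field_simp
    ring

theorem exists_eq_geom_combination_of_rec {w : ℕ → K} (hab : a ≠ b) (hac : a ≠ c) (hbc : b ≠ c)
    (ha : a ^ 3 = p * a ^ 2 + q * a + s) (hb : b ^ 3 = p * b ^ 2 + q * b + s)
    (hc : c ^ 3 = p * c ^ 2 + q * c + s)
    (hrec : ∀ n, w (n + 3) = p * w (n + 2) + q * w (n + 1) + s * w n) :
    ∃ A B C : K, ∀ n, w n = A * a ^ n + B * b ^ n + C * c ^ n := by
  obtain ⟨A, B, C, h0, h1, h2⟩ := exists_vandermonde_three_solution hab hac hbc (w 0) (w 1) (w 2)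
  exact ⟨A, B, C, eq_geom_combination_of_rec ha hb hc hrec h0 h1 h2⟩

end LinearRecurrence

section Oscillation

theorem abs_sum_re_mul_pow_le {ζ : ℂ} (hζ : ‖ζ‖ = 1) (hζ1 : ζ ≠ 1) (B : ℂ) (m : ℕ) :
    |∑ n ∈ range m, (B * ζ ^ n).re| ≤ 2 * ‖B‖ / ‖ζ - 1‖ := by
  have hgeom : ‖ζ ^ m - 1‖ ≤ 2 := by
    calc ‖ζ ^ m - 1‖ ≤ ‖ζ ^ m‖ + ‖(1 : ℂ)‖ := norm_sub_le _ _
      _ = 2 := by rw [norm_pow, hζ, one_pow, norm_one]; norm_num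
  calc |∑ n ∈ range m, (B * ζ ^ n).re| = |(B * ((ζ ^ m - 1) / (ζ - 1))).re| := by
        rw [← geom_sum_eq hζ1, mul_sum, Complex.re_sum]
    _ ≤ ‖B‖ * (‖ζ ^ m - 1‖ / ‖ζ - 1‖) := by
        rw [← norm_div, ← norm_mul]; exact Complex.abs_re_le_norm _
    _ ≤ 2 * ‖B‖ / ‖ζ - 1‖ := by
        rw [mul_div_assoc', mul_comm 2]; gcongr

theorem re_sq_eq (w : ℂ) : w.re ^ 2 = (‖w‖ ^ 2 + (w ^ 2).re) / 2 := by
  rw [Complex.sq_norm, Complex.normSq_apply, sq, sq, Complex.mul_re]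
  ring

theorem exists_re_mul_pow_neg {B ζ : ℂ} (hB : B ≠ 0) (hζ : ‖ζ‖ = 1) (hζ2 : ζ ^ 2 ≠ 1) :
    ∃ n, (B * ζ ^ n).re < 0 := by
  by_contra! hnonneg
  have hζ1 : ζ ≠ 1 := by rintro rfl; exact hζ2 (one_pow 2)
  have hζ2' : ‖ζ ^ 2‖ = 1 := by rw [norm_pow, hζ, one_pow]
  have hB₀ : 0 < ‖B‖ := norm_pos_iff.mpr hB
  have hnorm : ∀ n, ‖B * ζ ^ n‖ = ‖B‖ := fun n => by rw [norm_mul, norm_pow, hζ, one_pow, mul_one]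
  have hbound (m : ℕ) : (m : ℝ) ≤ 2 / ‖ζ ^ 2 - 1‖ + 4 / ‖ζ - 1‖ := by
    have hsq : ∑ n ∈ range m, (B * ζ ^ n).re ^ 2
        = m * ‖B‖ ^ 2 / 2 + (∑ n ∈ range m, (B ^ 2 * (ζ ^ 2) ^ n).re) / 2 := by
      have hpow : ∀ n, (B * ζ ^ n) ^ 2 = B ^ 2 * (ζ ^ 2) ^ n := fun n => by ring
      simp only [re_sq_eq, hnorm, hpow, ← sum_div, sum_add_distrib, sum_const, card_range,
        nsmul_eq_mul, add_div]
    have hsq_sum := abs_le.mp (abs_sum_re_mul_pow_le hζ2' hζ2 (B ^ 2) m)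
    have hsum := abs_le.mp (abs_sum_re_mul_pow_le hζ hζ1 B m)
    have hpointwise :
        ∑ n ∈ range m, (B * ζ ^ n).re ^ 2 ≤ ‖B‖ * ∑ n ∈ range m, (B * ζ ^ n).re := by
      rw [mul_sum]
      refine sum_le_sum fun n _ => ?_
      have := hnorm n ▸ Complex.re_le_norm (B * ζ ^ n)
      nlinarith [hnonneg n]
    rw [norm_pow] at hsq_sum
    refine le_of_mul_le_mul_left ?_ (by positivity : 0 < ‖B‖ ^ 2 / 2)
    calc ‖B‖ ^ 2 / 2 * m
        = ∑ n ∈ range m, (B * ζ ^ n).re ^ 2 - (∑ n ∈ range m, (B ^ 2 * (ζ ^ 2) ^ n).re) / 2 := by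
          rw [hsq]; ring
      _ ≤ ‖B‖ * (2 * ‖B‖ / ‖ζ - 1‖) + 2 * ‖B‖ ^ 2 / ‖ζ ^ 2 - 1‖ / 2 := by
          have := mul_le_mul_of_nonneg_left hsum.2 hB₀.le
          linarith [hsq_sum.1]
      _ = ‖B‖ ^ 2 / 2 * (2 / ‖ζ ^ 2 - 1‖ + 4 / ‖ζ - 1‖) := by ring
  obtain ⟨m, hm⟩ := exists_nat_gt (2 / ‖ζ ^ 2 - 1‖ + 4 / ‖ζ - 1‖)
  exact (hbound m).not_gt hm

theorem frequently_re_mul_pow_neg {B ζ : ℂ} (hB : B ≠ 0) (hζ : ‖ζ‖ = 1) (hζ2 : ζ ^ 2 ≠ 1) :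
    ∃ᶠ n in atTop, (B * ζ ^ n).re < 0 := by
  refine frequently_atTop.mpr fun N => ?_
  have hζN : ζ ^ N ≠ 0 := pow_ne_zero _ (norm_ne_zero_iff.mp (hζ ▸ one_ne_zero))
  obtain ⟨n, hn⟩ := exists_re_mul_pow_neg (mul_ne_zero hB hζN) hζ hζ2
  exact ⟨N + n, le_add_right le_rfl, by rwa [pow_add, ← mul_assoc]⟩

theorem frequently_add_re_mul_pow_lt_one {ρ : ℝ} {b : ℂ} (hρ : |ρ| < 1) (hb : b.im ≠ 0)
    (A : ℝ) (B : ℂ) : ∃ᶠ n in atTop, A * ρ ^ n + (B * b ^ n).re < 1 := by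
  have hsmall : ∀ᶠ n in atTop, A * ρ ^ n < 1 := by
    have := (tendsto_pow_atTop_nhds_zero_of_abs_lt_one hρ).const_mul A
    rw [mul_zero] at this
    exact this.eventually_lt_const one_pos
  rcases eq_or_ne B 0 with rfl | hB
  · simpa using hsmall.frequently
  set R := ‖b‖
  have hR : 0 < R := norm_pos_iff.mpr fun h => hb (by simp [h])
  set ζ := b / R
  have hbζ : b = R * ζ := (mul_div_cancel₀ b (Complex.ofReal_ne_zero.mpr hR.ne')).symm
  have hζ : ‖ζ‖ = 1 := by simp [ζ, R, hR.ne']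
  have hζ2 : ζ ^ 2 ≠ 1 := by
    rw [Ne, sq_eq_one_iff]
    have : ζ.im ≠ 0 := by simp [ζ, Complex.div_ofReal_im, hb, hR.ne']
    rintro (h | h) <;> simp [h] at this
  refine (frequently_re_mul_pow_neg hB hζ hζ2).and_eventually hsmall |>.mono fun n ⟨hneg, hA⟩ => ?_
  have : (B * b ^ n).re = R ^ n * (B * ζ ^ n).re := by
    rw [hbζ, mul_pow, ← Complex.ofReal_pow, mul_left_comm, Complex.re_ofReal_mul]
  have := mul_neg_of_pos_of_neg (pow_pos hR n) hneg
  linarith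

end Oscillation

section Sequence

variable {r θ : ℝ}

theorem inv_pow_three_of_qC_eq_zero {t : ℂ} (ht : t ≠ 0) (hq : qC r θ t = 0) :
    t⁻¹ ^ 3 = (r - θ) * t⁻¹ ^ 2 + -(r - 2 * θ) * t⁻¹ + -θ := by
  rw [qC] at hq
  field_simp
  linear_combination hq

theorem u_add_three_complex (r θ δ : ℝ) (n : ℕ) :
    (u r θ δ (n + 3) : ℂ) = (r - θ) * u r θ δ (n + 2) + -(r - 2 * θ) * u r θ δ (n + 1)
      + -θ * u r θ δ n := by
  rw [u]; push_cast; ring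

theorem im_inv_ne_zero {z : ℂ} (hz : z.im ≠ 0) : z⁻¹.im ≠ 0 := by
  rw [Complex.inv_im]
  exact div_ne_zero (neg_ne_zero.mpr hz) (Complex.normSq_pos.mpr fun h => hz (by simp [h])).ne'

theorem re_mul_conj_pow (C b : ℂ) (n : ℕ) :
    (C * starRingEnd ℂ b ^ n).re = (starRingEnd ℂ C * b ^ n).re := by
  rw [← Complex.conj_re, map_mul, map_pow, Complex.conj_conj]

theorem exists_u_eq_of_qC_eq (δ α : ℝ) {γ : ℂ} (hα : α ≠ 0) (hγ : γ.im ≠ 0)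
    (hfact : ∀ x : ℂ,
      qC r θ x = (1 - x / (α : ℂ)) * (1 - x / γ) * (1 - x / (starRingEnd ℂ γ))) :
    ∃ (A : ℝ) (B : ℂ), ∀ n, u r θ δ n = A * α⁻¹ ^ n + (B * γ⁻¹ ^ n).re := by
  have hγ₀ : γ ≠ 0 := fun h => hγ (by simp [h])
  have hα₀ : (α : ℂ) ≠ 0 := Complex.ofReal_ne_zero.mpr hα
  have hγ₀' : starRingEnd ℂ γ ≠ 0 := (map_ne_zero _).mpr hγ₀
  have hb : γ⁻¹.im ≠ 0 := im_inv_ne_zero hγ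
  have hab : (α : ℂ)⁻¹ ≠ γ⁻¹ := fun h => hb (by rw [← h, ← Complex.ofReal_inv, Complex.ofReal_im])
  have hac : (α : ℂ)⁻¹ ≠ (starRingEnd ℂ γ)⁻¹ := by
    rw [← map_inv₀]
    intro h
    have := congrArg Complex.im h
    rw [Complex.conj_im, ← Complex.ofReal_inv, Complex.ofReal_im] at this
    exact hb (by linarith)
  have hbc : γ⁻¹ ≠ (starRingEnd ℂ γ)⁻¹ := by
    rw [← map_inv₀]; exact fun h => hb (Complex.conj_eq_iff_im.mp h.symm)
  obtain ⟨A, B, C, h⟩ := exists_eq_geom_combination_of_rec (w := fun n => (u r θ δ n : ℂ))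
    hab hac hbc (inv_pow_three_of_qC_eq_zero hα₀ (by simp [hfact, hα₀]))
    (inv_pow_three_of_qC_eq_zero hγ₀ (by simp [hfact, hγ₀]))
    (inv_pow_three_of_qC_eq_zero hγ₀' (by simp [hfact, hγ₀'])) (u_add_three_complex r θ δ)
  refine ⟨A.re, B + starRingEnd ℂ C, fun n => ?_⟩
  have := congrArg Complex.re (h n)
  rw [← map_inv₀, Complex.ofReal_re, Complex.add_re, Complex.add_re, re_mul_conj_pow,
    ← Complex.ofReal_inv, ← Complex.ofReal_pow, Complex.re_mul_ofReal] at this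
  rw [this, add_mul, Complex.add_re, add_assoc]

end Sequence

theorem complex_case_general (r θ δ : ℝ) (α : ℝ) (γ : ℂ)
    (hα : 1 < |α|) (hγim : γ.im ≠ 0)
    (hfact : ∀ x : ℂ,
      qC r θ x = (1 - x / (α : ℂ)) * (1 - x / γ) * (1 - x / (starRingEnd ℂ γ))) :
    ∃ N : ℕ, 0 < N ∧ u r θ δ (N + 1) ≤ u r θ δ N := by
  obtain ⟨A, B, hu⟩ :=
    exists_u_eq_of_qC_eq δ α (fun h => by simp [h] at hα; linarith) hγim hfact
  have hρ : |α⁻¹| < 1 := by rw [abs_inv]; exact inv_lt_one_of_one_lt₀ hα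
  by_contra! hinc
  have hge : ∀ n, 1 ≤ n → 1 ≤ u r θ δ n :=
    Nat.le_induction le_rfl fun n hn ih => ih.trans (hinc n hn).le
  obtain ⟨n, hn, hlt⟩ :=
    (frequently_add_re_mul_pow_lt_one hρ (im_inv_ne_zero hγim) A B).forall_exists_of_atTop 1
  exact (hge n hn).not_gt (hu n ▸ hlt)

/-- If `q` factors as `(1 - x/α)(1 - x/γ)(1 - x/γ̄)` with `α` real, `|α| > 1`,
and `γ` a non-real complex number with `|γ| < 1`, then the sequence `u` is not
eventually strictly increasing: there is `N > 0` with `u_N ≥ u_{N+1}`. -/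
theorem complex_case (r θ δ : ℝ) (α : ℝ) (γ : ℂ)
    (hα : 1 < |α|) (hγim : γ.im ≠ 0) (hγabs : ‖γ‖ < 1)
    (hfact : ∀ x : ℂ,
      qC r θ x = (1 - x / (α : ℂ)) * (1 - x / γ) * (1 - x / (starRingEnd ℂ γ))) :
    ∃ N : ℕ, 0 < N ∧ u r θ δ (N + 1) ≤ u r θ δ N :=
  complex_case_general r θ δ α γ hα hγim hfact
end
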